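/- For every smooth 1-form θ on M and all smooth vector fields X,Y,Z,W, θ((d^∇R)(X,Y,Z)W) = d(R_{θ,W} − Ψ_{θ,W})(X,Y,Z), where (d^∇R)(X,Y,Z)W := Σ_cyc [∇_X(R(Y,Z)W) − R(Y,Z)(∇_X W)] − Σ_cyc R([X,Y],Z)W is the exterior covariant derivative of the endomorphism-valued curvature 2-form, and each Σ_cyc denotes the sum over the cyclic permutations (X,Y,Z), (Y,Z,X), (Z,X,Y). -/

import Mathlib

open scoped Manifold

local notation "∞" => (⊤ : ℕ∞)

noncomputable section

variable {E : Type*} [NormedAddCommGroup E] [NormedSpace ℝ E]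
  {H : Type*} [TopologicalSpace H]

/-- A linear connection on the smooth manifold `M`, given as an operator on global smooth
vector fields (realised as derivations of the algebra `C^∞(M)` of smooth real-valued
functions) which is ℝ-bilinear, `C^∞(M)`-linear in its first argument and satisfies the
Leibniz rule `∇_X (f • Y) = X f • Y + f • ∇_X Y` in its second argument. -/
structure LinearConnection (I : ModelWithCorners ℝ E H) (M : Type*) [TopologicalSpace M]
    [ChartedSpace H M] [IsManifold I ∞ M] where
  cov : Derivation ℝ C^∞⟮I, M; ℝ⟯ C^∞⟮I, M; ℝ⟯ →
        Derivation ℝ C^∞⟮I, M; ℝ⟯ C^∞⟮I, M; ℝ⟯ →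
        Derivation ℝ C^∞⟮I, M; ℝ⟯ C^∞⟮I, M; ℝ⟯
  add_left : ∀ X X' Y, cov (X + X') Y = cov X Y + cov X' Y
  smul_real_left : ∀ (r : ℝ) (X Y), cov (r • X) Y = r • cov X Y
  smul_smooth_left : ∀ (f : C^∞⟮I, M; ℝ⟯) (X Y), cov (f • X) Y = f • cov X Y
  add_right : ∀ X Y Y', cov X (Y + Y') = cov X Y + cov X Y'
  smul_real_right : ∀ (r : ℝ) (X Y), cov X (r • Y) = r • cov X Y
  leibniz : ∀ (f : C^∞⟮I, M; ℝ⟯) (X Y), cov X (f • Y) = X f • Y + f • cov X Y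

variable {I : ModelWithCorners ℝ E H}
  {M : Type*} [TopologicalSpace M] [ChartedSpace H M] [IsManifold I ∞ M]

/-- Smooth real-valued functions on `M`. -/
local notation "Cinf" => C^∞⟮I, M; ℝ⟯
/-- Smooth global vector fields on `M`, as derivations of `C^∞(M)`. -/
local notation "VF" => Derivation ℝ C^∞⟮I, M; ℝ⟯ C^∞⟮I, M; ℝ⟯

namespace LinearConnection

variable (nab : LinearConnection I M)

/-- The torsion `T(X,Y) := ∇_X Y − ∇_Y X − [X,Y]` of a linear connection. -/
def torsion (X Y : VF) : VF := nab.cov X Y - nab.cov Y X - ⁅X, Y⁆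

/-- The curvature `R(X,Y)Z := ∇_X ∇_Y Z − ∇_Y ∇_X Z − ∇_{[X,Y]} Z` of a linear connection. -/
def curv (X Y Z : VF) : VF :=
  nab.cov X (nab.cov Y Z) - nab.cov Y (nab.cov X Z) - nab.cov ⁅X, Y⁆ Z

/-- The covariant derivative along `X` of a scalar-valued map of one vector field
argument (e.g. a 1-form): `(∇_X θ)(Y) := X(θ(Y)) − θ(∇_X Y)`. -/
def covOne (X : VF) (θ : VF → Cinf) : VF → Cinf :=
  fun Y => X (θ Y) - θ (nab.cov X Y)

/-- The covariant derivative `(∇_X T)(Y,Z) := ∇_X(T(Y,Z)) − T(∇_X Y, Z) − T(Y, ∇_X Z)`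
of the torsion. -/
def covTorsion (X Y Z : VF) : VF :=
  nab.cov X (nab.torsion Y Z) - nab.torsion (nab.cov X Y) Z - nab.torsion Y (nab.cov X Z)

/-- The covariant derivative
`(∇_X R)(Y,Z)W := ∇_X(R(Y,Z)W) − R(∇_X Y,Z)W − R(Y,∇_X Z)W − R(Y,Z)(∇_X W)`
of the curvature. -/
def covCurv (X Y Z W : VF) : VF :=
  nab.cov X (nab.curv Y Z W) - nab.curv (nab.cov X Y) Z W - nab.curv Y (nab.cov X Z) W
    - nab.curv Y Z (nab.cov X W)

end LinearConnection

/-- The exterior derivative of a 1-form (given as a bare function on vector fields):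
`dα(X,Y) := X(α(Y)) − Y(α(X)) − α([X,Y])`. -/
def extD1 (α : VF → Cinf) (X Y : VF) : Cinf :=
  X (α Y) - Y (α X) - α ⁅X, Y⁆

/-- The exterior derivative of a 2-form (given as a bare function on vector fields):
`dβ(X,Y,Z) := X(β(Y,Z)) + Y(β(Z,X)) + Z(β(X,Y)) − β([X,Y],Z) − β([Y,Z],X) − β([Z,X],Y)`. -/
def extD2 (β : VF → VF → Cinf) (X Y Z : VF) : Cinf :=
  X (β Y Z) + Y (β Z X) + Z (β X Y) - β ⁅X, Y⁆ Z - β ⁅Y, Z⁆ X - β ⁅Z, X⁆ Y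

/-! Since `X(θ V) = (∇_X θ)(V) + θ(∇_X V)`, the difference `θ((d^∇R)(X,Y,Z)W) − dR_{θ,W}(X,Y,Z)`
is `−Σ_cyc [(∇_X θ)(R(Y,Z)W) + θ(R(Y,Z)∇_X W)]`, so everything reduces to showing that this
cyclic sum is `dΨ_{θ,W}(X,Y,Z)`. -/

namespace LinearConnection

variable (nab : LinearConnection I M)

theorem cov_sub_right (X Y Y' : VF) : nab.cov X (Y - Y') = nab.cov X Y - nab.cov X Y' := by
  rw [sub_eq_add_neg, ← neg_one_smul ℝ Y', nab.add_right, nab.smul_real_right]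
  module

/-- `psi θ W` is `Ψ_{θ,W}`. -/
def psi (θ : VF → Cinf) (W X Y : VF) : Cinf :=
  nab.covOne Y θ (nab.cov X W) - nab.covOne X θ (nab.cov Y W)

/-- The cyclic commutator terms `[X,Y] θ(∇_Z W)` of `dΨ` cancel against its bracket terms, and
what remains reassembles into curvature. -/
theorem extD2_psi {F : Type*} [FunLike F VF Cinf] [AddMonoidHomClass F VF Cinf] (θ : F)
    (X Y Z W : VF) :
    extD2 (nab.psi θ W) X Y Z =
      nab.covOne X θ (nab.curv Y Z W) + θ (nab.curv Y Z (nab.cov X W))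
        + (nab.covOne Y θ (nab.curv Z X W) + θ (nab.curv Z X (nab.cov Y W)))
        + (nab.covOne Z θ (nab.curv X Y W) + θ (nab.curv X Y (nab.cov Z W))) := by
  simp only [extD2, psi, covOne, curv, nab.cov_sub_right, map_sub, Derivation.commutator_apply]
  abel

end LinearConnection

/-- `θ((d^∇R)(X,Y,Z)W) = d(R_{θ,W} − Ψ_{θ,W})(X,Y,Z)`, where
`(d^∇R)(X,Y,Z)W := Σ_cyc [∇_X(R(Y,Z)W) − R(Y,Z)(∇_X W)] − Σ_cyc R([X,Y],Z)W` is the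
exterior covariant derivative of the (endomorphism-valued) curvature 2-form. -/
theorem ext_cov_deriv_curvature (nab : LinearConnection I M)
    (θ : VF →ₗ[Cinf] Cinf) (X Y Z W : VF) :
    θ ((nab.cov X (nab.curv Y Z W) - nab.curv Y Z (nab.cov X W))
        + (nab.cov Y (nab.curv Z X W) - nab.curv Z X (nab.cov Y W))
        + (nab.cov Z (nab.curv X Y W) - nab.curv X Y (nab.cov Z W))
        - nab.curv ⁅X, Y⁆ Z W - nab.curv ⁅Y, Z⁆ X W - nab.curv ⁅Z, X⁆ Y W) =
      extD2 (fun A B => θ (nab.curv A B W)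
          - (nab.covOne B (⇑θ) (nab.cov A W) - nab.covOne A (⇑θ) (nab.cov B W))) X Y Z := by
  have hΨ := nab.extD2_psi θ X Y Z W
  simp only [extD2, LinearConnection.psi, LinearConnection.covOne, map_add, map_sub] at hΨ ⊢
  linear_combination hΨ
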